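/- arXiv:2108.10526 — 6 statements merged into one kernel-verified Lean document; each statement's English description precedes it below -/
import Mathlib

section
/- If S ⊆ {1,...,n} is sum-free and a is the largest element of S, then |S| ≤ ⌈a/2⌉; in particular |S| ≤ ⌈n/2⌉. -/
/-!
Let `a` be the largest element of `S` and `T = S \ {a}`. Both `T` and its reflection `a - T`
lie in `{1, …, a - 1}`, and they are disjoint since `x = a - y` with `x, y ∈ T` would give
`x + y = a ∈ S`. Hence `2 |T| ≤ a - 1`, i.e. `|S| ≤ ⌈a/2⌉ ≤ ⌈n/2⌉`.
-/

def IsSumFree (S : Finset ℕ) : Prop :=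
  ∀ x ∈ S, ∀ y ∈ S, x + y ∉ S

namespace IsSumFree

variable {S : Finset ℕ}

theorem zero_notMem (hS : IsSumFree S) : 0 ∉ S :=
  fun h0 => hS 0 h0 0 h0 h0

theorem erase_subset_Icc {a : ℕ} (hS : IsSumFree S) (hmax : ∀ x ∈ S, x ≤ a) :
    S.erase a ⊆ Finset.Icc 1 (a - 1) := by
  intro x hx
  obtain ⟨hxa, hxS⟩ := Finset.mem_erase.1 hx
  have hx0 : x ≠ 0 := fun h => hS.zero_notMem (h ▸ hxS)
  have := hmax x hxS
  rw [Finset.mem_Icc]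
  omega

theorem two_mul_card_erase_le {a : ℕ} (hS : IsSumFree S) (ha : a ∈ S)
    (hmax : ∀ x ∈ S, x ≤ a) : 2 * (S.erase a).card ≤ a - 1 := by
  set T := S.erase a
  have hT : T ⊆ Finset.Icc 1 (a - 1) := hS.erase_subset_Icc hmax
  have hreflect : T.image (a - ·) ⊆ Finset.Icc 1 (a - 1) := by
    intro z hz
    obtain ⟨x, hx, rfl⟩ := Finset.mem_image.1 hz
    have := Finset.mem_Icc.1 (hT hx)
    rw [Finset.mem_Icc]
    omega
  have hdisj : Disjoint T (T.image (a - ·)) := by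
    rw [Finset.disjoint_right]
    rintro z hz hzT
    obtain ⟨x, hx, rfl⟩ := Finset.mem_image.1 hz
    have hxa : x ≤ a := hmax x (Finset.mem_of_mem_erase hx)
    exact hS _ (Finset.mem_of_mem_erase hzT) x (Finset.mem_of_mem_erase hx)
      (by rwa [Nat.sub_add_cancel hxa])
  have hcard : (T.image (a - ·)).card = T.card := by
    refine Finset.card_image_of_injOn fun x hx y hy hxy => ?_
    have := Finset.mem_Icc.1 (hT hx)
    have := Finset.mem_Icc.1 (hT hy)
    omega
  calc 2 * T.card = (T ∪ T.image (a - ·)).card := by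
        rw [Finset.card_union_of_disjoint hdisj, hcard, two_mul]
    _ ≤ (Finset.Icc 1 (a - 1)).card := Finset.card_le_card (Finset.union_subset hT hreflect)
    _ = a - 1 := by simp

theorem card_le_max'_add_one_div_two (hS : IsSumFree S) (hne : S.Nonempty) :
    S.card ≤ (S.max' hne + 1) / 2 := by
  have ha := S.max'_mem hne
  have h := hS.two_mul_card_erase_le ha (S.le_max' · ·)
  rw [Finset.card_erase_of_mem ha] at h
  have : S.max' hne ≠ 0 := fun h0 => hS.zero_notMem (h0 ▸ ha)
  have := hne.card_pos
  omega

end IsSumFree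

theorem stmt_3 (n : ℕ) (S : Finset ℕ) (hS : S ⊆ Finset.Icc 1 n)
    (hne : S.Nonempty) (hsf : ∀ x ∈ S, ∀ y ∈ S, x + y ∉ S) :
    S.card ≤ (S.max' hne + 1) / 2 ∧ S.card ≤ (n + 1) / 2 := by
  have hcard : S.card ≤ (S.max' hne + 1) / 2 := IsSumFree.card_le_max'_add_one_div_two hsf hne
  have hmax : S.max' hne ≤ n := (Finset.mem_Icc.1 (hS (S.max'_mem hne))).2
  exact ⟨hcard, hcard.trans (Nat.div_le_div_right (by omega))⟩
end

section
/- For u = ⌊(4n+7)/5⌋, the set S₀ = {(x,y) ∈ {1,...,n}² : u ≤ x + y ≤ 2u − 1} is sum-free and has size at least (3/5)n² − O(n); more precisely |S₀| ≥ (3/5)n² − 5n. -/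
/-!
Two pairs with coordinate sums in `[u, 2u - 1]` add up to a pair with sum at least `2u`, so `S₀`
is sum-free. The rest of the box `[1, n]²` consists of the triangle `x + y ≤ u - 1` and the
triangle `x + y ≥ 2u`, which the point reflection `(x, y) ↦ (n + 1 - x, n + 1 - y)` turns into
`x + y ≤ 2n + 2 - 2u`. A triangle `x + y ≤ m` of positive pairs is half of the box
`[1, m - 1] × [1, m]`, whose two halves are swapped by `(x, y) ↦ (m - x, m + 1 - y)`, so it has
at most `m (m - 1) / 2` points. As `u ≈ 4n/5`, the two triangles have about
`(8/25 + 2/25) n² = 2n²/5` points.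
-/

open Finset

theorem card_filter_sum_le_eq_card_filter_le_sum (a b c d k : ℤ) :
    #{p ∈ Icc a b ×ˢ Icc c d | p.1 + p.2 ≤ k} =
      #{p ∈ Icc a b ×ˢ Icc c d | a + b + c + d - k ≤ p.1 + p.2} := by
  refine card_nbij' (fun p ↦ (a + b - p.1, c + d - p.2)) (fun p ↦ (a + b - p.1, c + d - p.2))
    ?_ ?_ ?_ ?_ <;>
  · simp only [Set.MapsTo, Set.LeftInvOn, coe_filter, mem_product, mem_Icc, Set.mem_ofPred_eq,
      Prod.ext_iff]
    intros
    omega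

theorem two_mul_card_filter_sum_le_eq_card (m : ℤ) :
    2 * #{p ∈ Icc 1 (m - 1) ×ˢ Icc 1 m | p.1 + p.2 ≤ m} = #(Icc 1 (m - 1) ×ˢ Icc 1 m) := by
  rw [← card_filter_add_card_filter_not (s := Icc 1 (m - 1) ×ˢ Icc 1 m) (fun p ↦ p.1 + p.2 ≤ m),
    two_mul]
  congr 1
  rw [card_filter_sum_le_eq_card_filter_le_sum]
  exact congrArg card (filter_congr fun p _ ↦ by omega)

theorem two_mul_card_filter_sum_le (n m : ℤ) :
    2 * (#{p ∈ Icc 1 n ×ˢ Icc 1 n | p.1 + p.2 ≤ m} : ℤ) ≤ m * (m - 1) := by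
  have hsub : {p ∈ Icc 1 n ×ˢ Icc 1 n | p.1 + p.2 ≤ m} ⊆
      {p ∈ Icc 1 (m - 1) ×ˢ Icc 1 m | p.1 + p.2 ≤ m} := by
    intro p
    simp only [mem_filter, mem_product, mem_Icc]
    omega
  have hbox : (#(Icc 1 (m - 1) ×ˢ Icc 1 m) : ℤ) ≤ m * (m - 1) := by
    rw [card_product, Nat.cast_mul, Int.card_Icc, Int.card_Icc]
    rcases le_or_gt m 0 with hm | hm
    · rw [Int.toNat_of_nonpos (by omega : m + 1 - 1 ≤ 0), Nat.cast_zero, mul_zero]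
      nlinarith
    · rw [Int.toNat_of_nonneg (by omega), Int.toNat_of_nonneg (by omega)]
      linarith [mul_comm m (m - 1)]
  have hhalf := two_mul_card_filter_sum_le_eq_card m
  have hle := card_le_card hsub
  omega

theorem stmt_5 (n : ℤ) (hn : 1 ≤ n) :
    let u : ℤ := (4 * n + 7) / 5
    let S₀ : Finset (ℤ × ℤ) :=
      (Finset.Icc 1 n ×ˢ Finset.Icc 1 n).filter
        (fun p => u ≤ p.1 + p.2 ∧ p.1 + p.2 ≤ 2 * u - 1)
    (∀ a ∈ S₀, ∀ b ∈ S₀, a + b ∉ S₀) ∧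
    (3 / 5 : ℚ) * (n : ℚ) ^ 2 - 5 * (n : ℚ) ≤ (S₀.card : ℚ) := by
  intro u S₀
  have hu : 4 * n + 3 ≤ 5 * u ∧ 5 * u ≤ 4 * n + 7 := by omega
  refine ⟨fun a ha b hb hab ↦ ?_, ?_⟩
  · simp only [S₀, mem_filter, Prod.fst_add, Prod.snd_add] at ha hb hab
    omega
  set L := {p ∈ Icc 1 n ×ˢ Icc 1 n | p.1 + p.2 ≤ u - 1}
  set H := {p ∈ Icc 1 n ×ˢ Icc 1 n | 2 * u ≤ p.1 + p.2}
  have hcover : n * n ≤ (#S₀ + #L + #H : ℤ) := by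
    have hsub : Icc 1 n ×ˢ Icc 1 n ⊆ S₀ ∪ L ∪ H := by
      intro p hp
      simp only [S₀, L, H, mem_union, mem_filter, hp, true_and]
      omega
    have hcard := (card_le_card hsub).trans
      ((card_union_le _ _).trans (Nat.add_le_add_right (card_union_le _ _) _))
    rw [card_product, Int.card_Icc, add_sub_cancel_right] at hcard
    zify [Int.toNat_of_nonneg (by omega : 0 ≤ n)] at hcard
    exact hcard
  have hL := two_mul_card_filter_sum_le n (u - 1)
  have hH := two_mul_card_filter_sum_le n (2 * n + 2 - 2 * u)
  rw [card_filter_sum_le_eq_card_filter_le_sum, show 1 + n + 1 + n - (2 * n + 2 - 2 * u) = 2 * u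
    by ring] at hH
  have hS₀ : 6 * n ^ 2 - 50 * n ≤ 10 * (#S₀ : ℤ) := by
    nlinarith [mul_nonneg (by omega : (0 : ℤ) ≤ 5 * u - 4 * n - 3) (by omega : 0 ≤ 4 * n + 7 - 5 * u)]
  have hS₀ℚ : (6 * n ^ 2 - 50 * n : ℚ) ≤ 10 * #S₀ := by exact_mod_cast hS₀
  linarith
end

section
/- Let S, T ⊆ {1,...,n}² with S sum-free, and let a ∈ S. Then |S ∩ (T ∪ (a − T))| ≤ |T|, where a − T = {a − t : t ∈ T}. -/
/-! An element `x ∈ S` of `T ∪ (a - T)` is either in `S ∩ T`, or it is `a - t` for some `t ∈ T`,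
and then `t = a - x ∉ S` because `x + (a - x) = a ∈ S`. So `S ∩ (T ∪ (a - T))` is covered by
`S ∩ T` together with the image of `T \ S` under `t ↦ a - t`, whose sizes add up to at most `|T|`. -/

open Finset

section SumFree

variable {G : Type*} [AddCommGroup G] {S T : Finset G} {a : G}

theorem sub_notMem_of_sumFree (hsf : ∀ u ∈ S, ∀ v ∈ S, u + v ∉ S) (ha : a ∈ S) {x : G}
    (hx : x ∈ S) : a - x ∉ S := fun hax =>
  hsf x hx (a - x) hax (by rwa [add_sub_cancel])

variable [DecidableEq G]

theorem inter_union_image_sub_subset_of_sumFree (hsf : ∀ u ∈ S, ∀ v ∈ S, u + v ∉ S)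
    (ha : a ∈ S) :
    S ∩ (T ∪ T.image (a - ·)) ⊆ S ∩ T ∪ (T \ S).image (a - ·) := by
  intro x hx
  obtain ⟨hxS, hxT | hxaT⟩ := mem_inter.1 hx |>.imp_right mem_union.1
  · exact mem_union_left _ (mem_inter.2 ⟨hxS, hxT⟩)
  · obtain ⟨t, htT, rfl⟩ := mem_image.1 hxaT
    have htS : t ∉ S := by simpa using sub_notMem_of_sumFree hsf ha hxS
    exact mem_union_right _ (mem_image_of_mem _ (mem_sdiff.2 ⟨htT, htS⟩))

theorem card_inter_union_image_sub_le_of_sumFree (hsf : ∀ u ∈ S, ∀ v ∈ S, u + v ∉ S)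
    (ha : a ∈ S) :
    #(S ∩ (T ∪ T.image (a - ·))) ≤ #T :=
  calc #(S ∩ (T ∪ T.image (a - ·)))
      ≤ #(S ∩ T ∪ (T \ S).image (a - ·)) :=
        card_le_card (inter_union_image_sub_subset_of_sumFree hsf ha)
    _ ≤ #(S ∩ T) + #(T \ S) := (card_union_le _ _).trans (Nat.add_le_add_left card_image_le _)
    _ = #T := by rw [inter_comm, card_inter_add_card_sdiff]

end SumFree

theorem stmt_8_general (S T : Finset (ℤ × ℤ))
    (hsf : ∀ u ∈ S, ∀ v ∈ S, u + v ∉ S)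
    (a : ℤ × ℤ) (ha : a ∈ S) :
    (S ∩ (T ∪ T.image (fun t => a - t))).card ≤ T.card :=
  card_inter_union_image_sub_le_of_sumFree hsf ha

theorem stmt_8 (n : ℤ) (S T : Finset (ℤ × ℤ))
    (hS : S ⊆ Finset.Icc 1 n ×ˢ Finset.Icc 1 n)
    (hT : T ⊆ Finset.Icc 1 n ×ˢ Finset.Icc 1 n)
    (hsf : ∀ u ∈ S, ∀ v ∈ S, u + v ∉ S)
    (a : ℤ × ℤ) (ha : a ∈ S) :
    (S ∩ (T ∪ T.image (fun t => a - t))).card ≤ T.card :=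
  stmt_8_general S T hsf a ha
end

section
/- Let S ⊆ {1,...,n}² be a (p,p)-sum-free set, a ∈ S, and let P ⊆ {1,...,n}² be a p-pairing set for a, meaning that for every (x₁,x₂) ∈ P the point (a₁/p − x₁, a₂/p − x₂) is also in P (assuming these are lattice points, e.g. p divides a₁ and a₂). Then |S ∩ P| ≤ |P| / 2. -/
/-!
With `p • c = a`, the reflection `x ↦ c - x` maps `P` into itself, and it cannot map a point of
`S` into `S`: `p • x + p • (c - x) = a ∈ S` would violate sum-freeness. So this injection sends
`S ∩ P` into `P \ S`, whence `S ∩ P` takes at most half of `P`.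
-/

open Finset

theorem Finset.two_mul_card_inter_le_of_mapsTo_sdiff {α : Type*} [DecidableEq α]
    {S P : Finset α} {f : α → α} (hmaps : ∀ x ∈ S ∩ P, f x ∈ P \ S)
    (hinj : Set.InjOn f (S ∩ P : Finset α)) : 2 * #(S ∩ P) ≤ #P := by
  have hle : #(S ∩ P) ≤ #(P \ S) := card_le_card_of_injOn f hmaps hinj
  have hsplit : #(S ∩ P) + #(P \ S) = #P := by
    rw [inter_comm]
    exact card_inter_add_card_sdiff P S
  omega

theorem sub_notMem_of_smul_add_smul_ne {R M : Type*} [Ring R] [AddCommGroup M] [Module R M]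
    {k : R} {S : Finset M} (hsf : ¬ ∃ u ∈ S, ∃ v ∈ S, ∃ w ∈ S, k • u + k • v = w)
    {c x : M} (hc : k • c ∈ S) (hx : x ∈ S) : c - x ∉ S := fun hcx =>
  hsf ⟨x, hx, c - x, hcx, k • c, hc, by rw [← smul_add, add_sub_cancel]⟩

theorem stmt_12_general (p : ℕ) (S P : Finset (ℤ × ℤ))
    (hsf : ¬ ∃ u ∈ S, ∃ v ∈ S, ∃ w ∈ S, (p : ℤ) • u + (p : ℤ) • v = w)
    (a : ℤ × ℤ) (ha : a ∈ S) (hd1 : (p : ℤ) ∣ a.1) (hd2 : (p : ℤ) ∣ a.2)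
    (hpair : ∀ x ∈ P, (a.1 / (p : ℤ) - x.1, a.2 / (p : ℤ) - x.2) ∈ P) :
    2 * (S ∩ P).card ≤ P.card := by
  set c : ℤ × ℤ := (a.1 / (p : ℤ), a.2 / (p : ℤ))
  have hc : (p : ℤ) • c = a := Prod.ext (Int.mul_ediv_cancel' hd1) (Int.mul_ediv_cancel' hd2)
  refine two_mul_card_inter_le_of_mapsTo_sdiff (f := (c - ·)) (fun x hx => ?_)
    (sub_right_injective.injOn)
  rw [mem_inter] at hx
  exact mem_sdiff.2 ⟨hpair x hx.2, sub_notMem_of_smul_add_smul_ne hsf (hc ▸ ha) hx.1⟩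

theorem stmt_12 (p : ℕ) (hp : 0 < p) (n : ℤ) (S P : Finset (ℤ × ℤ))
    (hS : S ⊆ Finset.Icc 1 n ×ˢ Finset.Icc 1 n)
    (hP : P ⊆ Finset.Icc 1 n ×ˢ Finset.Icc 1 n)
    (hsf : ¬ ∃ u ∈ S, ∃ v ∈ S, ∃ w ∈ S, (p : ℤ) • u + (p : ℤ) • v = w)
    (a : ℤ × ℤ) (ha : a ∈ S) (hd1 : (p : ℤ) ∣ a.1) (hd2 : (p : ℤ) ∣ a.2)
    (hpair : ∀ x ∈ P, (a.1 / (p : ℤ) - x.1, a.2 / (p : ℤ) - x.2) ∈ P) :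
    2 * (S ∩ P).card ≤ P.card :=
  stmt_12_general p S P hsf a ha hd1 hd2 hpair
end

section
/- Let S ⊆ {1,...,n}² be (p,p)-sum-free, a ∈ S, and T ⊆ {1,...,n}² a finite set such that p·(a + T) ⊆ {1,...,n}². Then |S ∩ (p·(a + T) ∪ T)| ≤ |T|, where p·(a+T) = {p·(a+t) : t ∈ T}. -/
theorem stmt_13 (p : ℕ) (hp : 0 < p) (n : ℤ) (S T : Finset (ℤ × ℤ))
    (hS : S ⊆ Finset.Icc 1 n ×ˢ Finset.Icc 1 n)
    (hT : T ⊆ Finset.Icc 1 n ×ˢ Finset.Icc 1 n)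
    (hsf : ¬ ∃ u ∈ S, ∃ v ∈ S, ∃ w ∈ S, (p : ℤ) • u + (p : ℤ) • v = w)
    (a : ℤ × ℤ) (ha : a ∈ S)
    (hsub : T.image (fun t => (p : ℤ) • (a + t)) ⊆ Finset.Icc 1 n ×ˢ Finset.Icc 1 n) :
    (S ∩ (T.image (fun t => (p : ℤ) • (a + t)) ∪ T)).card ≤ T.card := by
  classical
  set f : ℤ × ℤ → ℤ × ℤ := fun t => (p : ℤ) • (a + t) with hf
  have hp' : (p : ℤ) ≠ 0 := by exact_mod_cast hp.ne'
  have hinj : Function.Injective f := by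
    intro x y hxy
    have h1 : a + x = a + y := smul_right_injective (ℤ × ℤ) hp' hxy
    exact add_left_cancel h1
  have key : ∀ t ∈ T, f t ∈ S → t ∉ S := by
    intro t ht hft hts
    exact hsf ⟨a, ha, t, hts, f t, hft, (smul_add (p : ℤ) a t).symm⟩
  set A := T.filter (fun t => f t ∈ S) with hA
  set B := T.filter (fun t => t ∈ S) with hB
  have hd : Disjoint A B := by
    rw [Finset.disjoint_left]
    intro t htA htB
    simp only [hA, hB, Finset.mem_filter] at htA htB
    exact key t htA.1 htA.2 htB.2
  have h1 : S ∩ T.image f ⊆ A.image f := by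
    intro x hx
    rw [Finset.mem_inter, Finset.mem_image] at hx
    obtain ⟨hxS, t, ht, rfl⟩ := hx
    exact Finset.mem_image_of_mem f (Finset.mem_filter.2 ⟨ht, hxS⟩)
  have card1 : (S ∩ T.image f).card ≤ A.card :=
    le_trans (Finset.card_le_card h1) Finset.card_image_le
  have h2 : S ∩ T = B := by
    ext x
    simp [hB, and_comm]
  calc (S ∩ (T.image f ∪ T)).card
      = ((S ∩ T.image f) ∪ (S ∩ T)).card := by rw [Finset.inter_union_distrib_left]
    _ ≤ (S ∩ T.image f).card + (S ∩ T).card := Finset.card_union_le _ _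
    _ ≤ A.card + B.card := by rw [h2]; exact Nat.add_le_add_right card1 _
    _ = (A ∪ B).card := (Finset.card_union_of_disjoint hd).symm
    _ ≤ T.card := Finset.card_le_card (by
        intro x hx
        rcases Finset.mem_union.1 hx with h | h <;>
          exact (Finset.mem_filter.1 h).1)
end

section
/- Let A be a finite nonempty subset of ℕ² whose upper boundary is empty, i.e., there are no two distinct points p₁ = (x₁,y₁), p₂ = (x₂,y₂) in A with (y₂−y₁)/(x₂−x₁) < 0 such that no point of A lies strictly above the line through p₁ and p₂. Then there exists a point (a,b) ∈ A with a ≥ x and b ≥ y for all (x,y) ∈ A. -/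
theorem stmt_14 (A : Finset (ℕ × ℕ)) (hne : A.Nonempty)
    (hub : ¬ ∃ p₁ ∈ A, ∃ p₂ ∈ A, p₁.1 < p₂.1 ∧ p₂.2 < p₁.2 ∧
      ∀ q ∈ A,
        ((q.2 : ℤ) - (p₁.2 : ℤ)) * ((p₂.1 : ℤ) - (p₁.1 : ℤ)) ≤
          ((p₂.2 : ℤ) - (p₁.2 : ℤ)) * ((q.1 : ℤ) - (p₁.1 : ℤ))) :
    ∃ ab ∈ A, ∀ q ∈ A, q.1 ≤ ab.1 ∧ q.2 ≤ ab.2 := by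
  -- choose b maximizing y
  obtain ⟨b0, hb0A, hb0max⟩ := A.exists_max_image (fun q => q.2) hne
  -- among points with y = b0.2, choose max x
  have hfil : (A.filter (fun q => q.2 = b0.2)).Nonempty := ⟨b0, by simp [hb0A]⟩
  obtain ⟨b, hbF, hbmax⟩ := (A.filter (fun q => q.2 = b0.2)).exists_max_image
    (fun q => q.1) hfil
  rw [Finset.mem_filter] at hbF
  obtain ⟨hbA, hby⟩ := hbF
  have hbymax : ∀ q ∈ A, q.2 ≤ b.2 := fun q hq => hby ▸ hb0max q hq
  by_cases hdom : ∀ q ∈ A, q.1 ≤ b.1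
  · exact ⟨b, hbA, fun q hq => ⟨hdom q hq, hbymax q hq⟩⟩
  · exfalso
    push_neg at hdom
    obtain ⟨c, hcA, hc⟩ := hdom
    have hT : (A.filter (fun q => b.1 < q.1)).Nonempty :=
      ⟨c, Finset.mem_filter.2 ⟨hcA, hc⟩⟩
    obtain ⟨p, hpF, hpmax⟩ := (A.filter (fun q => b.1 < q.1)).exists_max_image
      (fun q => ((q.2 : ℚ) - b.2) / ((q.1 : ℚ) - b.1)) hT
    rw [Finset.mem_filter] at hpF
    obtain ⟨hpA, hpx⟩ := hpF
    have hpy : p.2 < b.2 := by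
      rcases lt_or_eq_of_le (hbymax p hpA) with h | h
      · exact h
      · exfalso
        have := hbmax p (Finset.mem_filter.2 ⟨hpA, by omega⟩)
        omega
    refine hub ⟨b, hbA, p, hpA, hpx, hpy, fun q hqA => ?_⟩
    by_cases hq : b.1 < q.1
    · have h1 : ((q.2 : ℚ) - b.2) / ((q.1 : ℚ) - b.1) ≤
          ((p.2 : ℚ) - b.2) / ((p.1 : ℚ) - b.1) :=
        hpmax q (Finset.mem_filter.2 ⟨hqA, hq⟩)
      have hd1 : (0 : ℚ) < (q.1 : ℚ) - b.1 := by
        have : (b.1 : ℚ) < q.1 := by exact_mod_cast hq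
        linarith
      have hd2 : (0 : ℚ) < (p.1 : ℚ) - b.1 := by
        have : (b.1 : ℚ) < p.1 := by exact_mod_cast hpx
        linarith
      rw [div_le_div_iff₀ hd1 hd2] at h1
      exact_mod_cast h1
    · push_neg at hq
      have h1 : ((q.2 : ℤ) - b.2) * ((p.1 : ℤ) - b.1) ≤ 0 := by
        have hy : (q.2 : ℤ) ≤ b.2 := by exact_mod_cast hbymax q hqA
        have hx : (b.1 : ℤ) < p.1 := by exact_mod_cast hpx
        nlinarith
      have h2 : (0 : ℤ) ≤ ((p.2 : ℤ) - b.2) * ((q.1 : ℤ) - b.1) := by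
        have hy : (p.2 : ℤ) < b.2 := by exact_mod_cast hpy
        have hx : (q.1 : ℤ) ≤ b.1 := by exact_mod_cast hq
        nlinarith
      linarith
end
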